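/- Let W̄ = (Z_k)_{k≥0} be the coalescent-walk trajectory Z^{(0)} associated (via the recursion of Φ_WC) with an i.i.d. random walk with step distribution ν. Then each increment Z_k - Z_{k-1} has the same distribution as the second marginal of ν (ℙ = 1/2 at -1, and 2^{-j-2} at j for j ≥ 0), conditionally on the past; in particular Z^{(0)} is a random walk with this step distribution. -/

import Mathlib

/-
Given the past up to time k, the increment of W is independent with law ν, while Z_k is a
function of the past; so the claim reduces to the fact that, for every fixed m, the law under ν
of the increment `coalescentStep m` does not depend on m and equals the second marginal of ν.
For m ≥ 0 the increment is the second coordinate. For m < 0, on the atoms (-i, l) the bijection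
(i, l) ↦ (l, i) for i < -m and (i, l) ↦ (i + m, l - m) otherwise preserves i + l, hence the
weight 2^{-i-l-3}, and turns the increment into the second coordinate.

Since W need not be measurable, past events are only shown to be ℙ-null-measurable, by induction
on k: a set A with ℙ A + ℙ Aᶜ ≤ 1 is null-measurable.
-/

open MeasureTheory

/-- The step distribution ν on ℤ²: mass 1/2 at (1,-1) and mass 2^{-i-j-3} at (-i,j). -/
noncomputable def nuStep : Measure (ℤ × ℤ) :=
  (2⁻¹ : ENNReal) • Measure.dirac ((1, -1) : ℤ × ℤ) +
    Measure.sum (fun p : ℕ × ℕ =>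
      ((2⁻¹ : ENNReal) ^ (p.1 + p.2 + 3)) • Measure.dirac ((-(p.1 : ℤ), (p.2 : ℤ)) : ℤ × ℤ))

/-- The second-coordinate marginal of ν: probability 1/2 at -1 and 2^{-j-2} at j ≥ 0. -/
noncomputable def stepProb (j : ℤ) : ENNReal :=
  if j = -1 then 2⁻¹ else if 0 ≤ j then (2⁻¹ : ENNReal) ^ (j.toNat + 2) else 0

open scoped ENNReal
open Set Function

-- Z_{k+1} - Z_k for the coalescent walk, when Z_k = m and the step of W is p.
def coalescentStep (m : ℤ) (p : ℤ × ℤ) : ℤ :=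
  if 0 ≤ m then p.2 else if m - p.1 < 0 then -p.1 else p.2 - m

lemma ENNReal.tsum_inv_two_pow_add_succ (c : ℕ) :
    ∑' i : ℕ, (2⁻¹ : ℝ≥0∞) ^ (i + c + 1) = 2⁻¹ ^ c := by
  simp_rw [pow_add, ENNReal.tsum_mul_right, ENNReal.tsum_geometric, ENNReal.one_sub_inv_two,
    inv_inv, pow_one, mul_right_comm, ENNReal.mul_inv_cancel two_ne_zero ENNReal.ofNat_ne_top,
    one_mul]

lemma nuStep_apply (s : Set (ℤ × ℤ)) :
    nuStep s = 2⁻¹ * s.indicator 1 (1, -1)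
      + ∑' p : ℕ × ℕ, 2⁻¹ ^ (p.1 + p.2 + 3) * s.indicator 1 (-(p.1 : ℤ), (p.2 : ℤ)) := by
  have hs : MeasurableSet s := .of_discrete
  simp only [nuStep, Measure.add_apply, Measure.smul_apply, Measure.sum_apply _ hs,
    Measure.dirac_apply' _ hs, smul_eq_mul]

instance : IsProbabilityMeasure nuStep where
  measure_univ := by
    have inner (i : ℕ) : ∑' l : ℕ, (2⁻¹ : ℝ≥0∞) ^ (i + l + 3) = 2⁻¹ ^ (i + 2) := by
      rw [← ENNReal.tsum_inv_two_pow_add_succ (i + 2)]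
      exact tsum_congr fun l => congrArg _ (by ring)
    simp only [nuStep_apply, indicator_univ, Pi.one_apply, mul_one, ENNReal.tsum_prod',
      inner, ENNReal.tsum_inv_two_pow_add_succ, pow_one, ENNReal.inv_two_add_inv_two]

lemma nuStep_snd (j : ℤ) : nuStep {p | p.2 = j} = stepProb j := by
  have inner (l : ℕ) : ∑' i : ℕ, (2⁻¹ : ℝ≥0∞) ^ (i + l + 3) = 2⁻¹ ^ (l + 2) :=
    ENNReal.tsum_inv_two_pow_add_succ (l + 2)
  rw [nuStep_apply, ENNReal.tsum_prod', ENNReal.tsum_comm]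
  simp only [indicator_apply, mem_ofPred_eq, Pi.one_apply, mul_ite, mul_one, mul_zero]
  rcases lt_or_ge j 0 with hj | hj
  · have hb (b : ℕ) : (b : ℤ) ≠ j := by omega
    simp [hb, stepProb, eq_comm, hj.not_ge]
  · lift j to ℕ using hj
    rw [tsum_eq_single j fun b hb => by simp [hb]]
    simp [inner, stepProb]

def coalescentReindex (M : ℕ) : ℕ × ℕ ≃ ℕ × ℕ where
  toFun p := if p.1 < M then (p.2, p.1) else (p.1 - M, p.2 + M)
  invFun q := if q.2 < M then (q.2, q.1) else (q.1 + M, q.2 - M)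
  left_inv p := by
    by_cases h : p.1 < M
    · simp [h]
    · ext <;> simp [h]; omega
  right_inv q := by
    by_cases h : q.2 < M
    · simp [h]
    · ext <;> simp [h]; omega

lemma coalescentReindex_fst_add_snd (M : ℕ) (p : ℕ × ℕ) :
    (coalescentReindex M p).1 + (coalescentReindex M p).2 = p.1 + p.2 := by
  simp only [coalescentReindex, Equiv.coe_fn_mk]
  split_ifs <;> simp <;> omega

lemma coalescentStep_one_neg_one (m : ℤ) : coalescentStep m (1, -1) = -1 := by
  unfold coalescentStep
  split_ifs <;> simp_all
  omega

lemma coalescentStep_neg_natCast (m : ℤ) (p : ℕ × ℕ) :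
    coalescentStep m (-(p.1 : ℤ), p.2) = (coalescentReindex (-m).toNat p).2 := by
  simp only [coalescentStep, coalescentReindex, Equiv.coe_fn_mk]
  split_ifs <;> simp <;> omega

lemma nuStep_coalescentStep (m j : ℤ) : nuStep {p | coalescentStep m p = j} = stepProb j := by
  rw [← nuStep_snd, nuStep_apply, nuStep_apply]
  conv_rhs => rw [← (coalescentReindex (-m).toNat).tsum_eq]
  simp only [indicator_apply, mem_ofPred_eq, Pi.one_apply, coalescentStep_one_neg_one,
    coalescentStep_neg_natCast, coalescentReindex_fst_add_snd]

namespace MeasureTheory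

-- `F` (the σ-algebra of the past) comes before `mΩ`, so that instance resolution picks `mΩ`.
variable {Ω : Type*} {F mΩ : MeasurableSpace Ω} {μ : Measure Ω}

lemma NullMeasurableSet.of_measure_add_measure_compl_le [IsFiniteMeasure μ] {s : Set Ω}
    (h : μ s + μ sᶜ ≤ μ univ) : NullMeasurableSet s μ := by
  set M := toMeasurable μ s
  set M' := toMeasurable μ sᶜ
  have hcover : M ∪ M' = univ := univ_subset_iff.mp <| (union_compl_self s).symm.subset.trans
    (union_subset_union (subset_toMeasurable μ s) (subset_toMeasurable μ sᶜ))
  have hoverlap : μ (M ∩ M') = 0 := by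
    have h' := measure_union_add_inter (μ := μ) M (measurableSet_toMeasurable μ sᶜ)
    rw [hcover, measure_toMeasurable, measure_toMeasurable] at h'
    have hle : μ univ + μ (M ∩ M') ≤ μ univ + 0 := by rw [add_zero, h']; exact h
    exact nonpos_iff_eq_zero.mp ((ENNReal.add_le_add_iff_left (measure_ne_top μ univ)).mp hle)
  have hdiff : M \ s ⊆ M ∩ M' := fun x hx => ⟨hx.1, subset_toMeasurable μ sᶜ hx.2⟩
  refine (measurableSet_toMeasurable μ s).nullMeasurableSet.congr (ae_eq_set.mpr ⟨?_, ?_⟩)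
  · exact measure_mono_null hdiff hoverlap
  · rw [sdiff_eq_empty.mpr (subset_toMeasurable μ s), measure_empty]

lemma NullMeasurableSet.inter_of_measure_inter_add_le [IsFiniteMeasure μ] {s t : Set Ω}
    (hs : NullMeasurableSet s μ) (h : μ (s ∩ t) + μ (s ∩ tᶜ) ≤ μ s) :
    NullMeasurableSet (s ∩ t) μ := by
  refine of_measure_add_measure_compl_le ?_
  have hcompl : (s ∩ t)ᶜ = s ∩ tᶜ ∪ sᶜ := by
    ext x; by_cases hx : x ∈ s <;> simp [hx]
  calc μ (s ∩ t) + μ (s ∩ t)ᶜ ≤ μ (s ∩ t) + (μ (s ∩ tᶜ) + μ sᶜ) := by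
        rw [hcompl]; gcongr; exact measure_union_le _ _
    _ ≤ μ s + μ sᶜ := by rw [← add_assoc]; gcongr
    _ = μ univ := measure_add_measure_compl₀ hs

lemma NullMeasurableSet.preimage_of_countable {α : Type*} [Countable α] {f : Ω → α}
    (hf : ∀ a, NullMeasurableSet (f ⁻¹' {a}) μ) (S : Set α) : NullMeasurableSet (f ⁻¹' S) μ := by
  rw [← biUnion_preimage_singleton]
  exact .biUnion S.to_countable fun a _ => hf a

section IndepIncrement

variable [IsFiniteMeasure μ] {β : Type*} [MeasurableSpace β] {ν : Measure β}
  [IsProbabilityMeasure ν] {D : Ω → β}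

lemma nullMeasurableSet_inter_preimage_of_indep
    (hF : ∀ B, MeasurableSet[F] B → NullMeasurableSet B μ)
    (hD : ∀ B, MeasurableSet[F] B → ∀ s, MeasurableSet s → μ (B ∩ D ⁻¹' s) = μ B * ν s)
    {B : Set Ω} (hB : MeasurableSet[F] B) {s : Set β} (hs : MeasurableSet s) :
    NullMeasurableSet (B ∩ D ⁻¹' s) μ :=
  (hF B hB).inter_of_measure_inter_add_le <| by
    rw [← preimage_compl, hD B hB s hs, hD B hB sᶜ hs.compl, ← mul_add,
      measure_add_measure_compl hs, measure_univ, mul_one]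

lemma measure_inter_mem_of_indep
    (hF : ∀ B, MeasurableSet[F] B → NullMeasurableSet B μ)
    (hD : ∀ B, MeasurableSet[F] B → ∀ s, MeasurableSet s → μ (B ∩ D ⁻¹' s) = μ B * ν s)
    {α : Type*} [Countable α] [MeasurableSpace α] [MeasurableSingletonClass α] {X : Ω → α}
    (hX : Measurable[F] X) {s : α → Set β} (hs : ∀ a, MeasurableSet (s a)) {q : ℝ≥0∞}
    (hq : ∀ a, ν (s a) = q) {B : Set Ω} (hB : MeasurableSet[F] B) :
    μ (B ∩ {ω | D ω ∈ s (X ω)}) = q * μ B := by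
  have hfiber (a : α) : MeasurableSet[F] (B ∩ X ⁻¹' {a}) :=
    hB.inter (hX (measurableSet_singleton a))
  have hdisj : Pairwise (Disjoint on fun a => B ∩ X ⁻¹' {a}) := fun a b hab =>
    ((pairwise_disjoint_fiber X hab).mono inter_subset_right inter_subset_right)
  calc μ (B ∩ {ω | D ω ∈ s (X ω)}) = μ (⋃ a, B ∩ X ⁻¹' {a} ∩ D ⁻¹' s a) := by
        congr 1; ext ω; simp
    _ = ∑' a, μ (B ∩ X ⁻¹' {a}) * q := by
        rw [measure_iUnion₀ (fun a b hab => ((hdisj hab).mono inter_subset_left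
          inter_subset_left).aedisjoint)
          fun a => nullMeasurableSet_inter_preimage_of_indep hF hD (hfiber a) (hs a)]
        simp only [hD _ (hfiber _) _ (hs _), hq]
    _ = q * μ B := by
        rw [ENNReal.tsum_mul_right, ← measure_iUnion₀ (fun a b hab => (hdisj hab).aedisjoint)
          fun a => hF _ (hfiber a), ← inter_iUnion, ← preimage_iUnion, iUnion_of_singleton,
          preimage_univ, inter_univ, mul_comm]

end IndepIncrement

end MeasureTheory

section History

variable {Ω G : Type*}

def history (W : ℕ → Ω → G) (k : ℕ) (ω : Ω) : Fin (k + 1) → G := fun i => W i ω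

lemma preimage_history_succ_singleton [AddGroup G] (W : ℕ → Ω → G) (k : ℕ)
    (v : Fin (k + 2) → G) :
    history W (k + 1) ⁻¹' {v} = history W k ⁻¹' {Fin.init v}
      ∩ (fun ω => W (k + 1) ω - W k ω) ⁻¹' {v (Fin.last (k + 1)) - v (Fin.last k).castSucc} := by
  ext ω
  simp only [mem_preimage, mem_singleton_iff, mem_inter_iff, funext_iff,
    Fin.forall_fin_succ' (n := k + 1)]
  constructor
  · rintro ⟨hinit, hlast⟩
    exact ⟨hinit, by rw [← hlast, ← hinit (Fin.last k)]; rfl⟩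
  · rintro ⟨hinit, hstep⟩
    refine ⟨hinit, ?_⟩
    rw [show W k ω = v (Fin.last k).castSucc from hinit (Fin.last k), sub_left_inj] at hstep
    exact hstep

variable [MeasurableSpace G]

lemma measurable_comap_history_apply (W : ℕ → Ω → G) {i n : ℕ} (hin : i ≤ n) :
    Measurable[MeasurableSpace.comap (history W n) inferInstance] (W i) :=
  (measurable_pi_apply (X := fun _ : Fin (n + 1) => G) ⟨i, Nat.lt_succ_of_le hin⟩).comp
    (comap_measurable (history W n))

lemma comap_history_mono (W : ℕ → Ω → G) {k n : ℕ} (hkn : k ≤ n) :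
    MeasurableSpace.comap (history W k) inferInstance
      ≤ MeasurableSpace.comap (history W n) inferInstance := by
  let _ := MeasurableSpace.comap (history W n) inferInstance
  exact Measurable.comap_le <| measurable_pi_lambda _ fun i =>
    measurable_comap_history_apply W (i.is_le.trans hkn)

end History

lemma nullMeasurableSet_of_measurableSet_comap_history {Ω G : Type*} [MeasurableSpace Ω]
    {ℙ : Measure Ω} [IsProbabilityMeasure ℙ] [AddGroup G] [Countable G] [MeasurableSpace G]
    [MeasurableSingletonClass G] {ν : Measure G} [IsProbabilityMeasure ν] {W : ℕ → Ω → G}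
    {x₀ : G} (hW0 : ∀ ω, W 0 ω = x₀)
    (hWstep : ∀ k : ℕ, ∀ B : Set Ω,
      MeasurableSet[MeasurableSpace.comap (history W k) inferInstance] B →
      ∀ s : Set G, ℙ (B ∩ {ω | W (k + 1) ω - W k ω ∈ s}) = ℙ B * ν s)
    (k : ℕ) {B : Set Ω}
    (hB : MeasurableSet[MeasurableSpace.comap (history W k) inferInstance] B) :
    NullMeasurableSet B ℙ := by
  induction k generalizing B with
  | zero =>
    obtain ⟨S, hS, rfl⟩ := hB
    have hconst : history W 0 = fun _ _ => x₀ := by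
      funext ω i
      rw [Fin.fin_one_eq_zero i]
      exact hW0 ω
    rw [hconst]
    exact (measurable_const hS).nullMeasurableSet
  | succ k ih =>
    obtain ⟨S, -, rfl⟩ := hB
    refine .preimage_of_countable (fun v => ?_) S
    rw [preimage_history_succ_singleton]
    exact nullMeasurableSet_inter_preimage_of_indep (fun _ hB => ih hB)
      (fun B hB s _ => hWstep k B hB s) ⟨_, measurableSet_singleton _, rfl⟩
      (measurableSet_singleton _)

lemma sub_eq_coalescentStep {z z' : ℤ} {d : ℤ × ℤ}
    (h : (0 ≤ z → z' = z + d.2) ∧ (z < 0 → z - d.1 < 0 → z' = z - d.1) ∧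
      (z < 0 → 0 ≤ z - d.1 → z' = d.2)) :
    z' - z = coalescentStep z d := by
  obtain ⟨h₁, h₂, h₃⟩ := h
  unfold coalescentStep
  split_ifs with hz hd
  · rw [h₁ hz]; ring
  · rw [h₂ (not_le.mp hz) hd]; ring
  · rw [h₃ (not_le.mp hz) (not_lt.mp hd)]

lemma measurable_comap_history_of_sub_eq {Ω G : Type*} [AddGroup G] [Countable G]
    [MeasurableSpace G] [MeasurableSingletonClass G] {W : ℕ → Ω → G} {Z : ℕ → Ω → ℤ} {z₀ : ℤ}
    (f : ℤ → G → ℤ) (hZ0 : ∀ ω, Z 0 ω = z₀)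
    (hZ : ∀ k ω, Z (k + 1) ω - Z k ω = f (Z k ω) (W (k + 1) ω - W k ω)) (k : ℕ) :
    Measurable[MeasurableSpace.comap (history W k) inferInstance] (Z k) := by
  induction k with
  | zero => rw [funext hZ0]; exact measurable_const
  | succ k ih =>
    have hZk : Measurable[MeasurableSpace.comap (history W (k + 1)) inferInstance] (Z k) :=
      ih.mono (comap_history_mono W k.le_succ) le_rfl
    rw [funext fun ω => eq_add_of_sub_eq' (hZ k ω)]
    exact (measurable_of_countable fun x : ℤ × G × G => x.1 + f x.1 (x.2.2 - x.2.1)).comp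
      (hZk.prodMk ((measurable_comap_history_apply W k.le_succ).prodMk
        (measurable_comap_history_apply W le_rfl)))

/-- For the coalescent-walk trajectory Z = Z^{(0)} built from a random walk W with
i.i.d. ν-distributed increments, each increment Z_{k+1} - Z_k has the distribution
`stepProb`, conditionally on the past of the walk; in particular Z is a random walk
with this step distribution. -/
theorem coalescent_trajectory_is_random_walk
    {Ω : Type*} [MeasurableSpace Ω] (ℙ : Measure Ω) [IsProbabilityMeasure ℙ]
    (W : ℕ → Ω → ℤ × ℤ)
    (hW0 : ∀ ω, W 0 ω = (0, 0))
    (hWstep : ∀ k : ℕ, ∀ B : Set Ω,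
      MeasurableSet[MeasurableSpace.comap (fun ω => fun i : Fin (k + 1) => W i ω)
        inferInstance] B →
      ∀ s : Set (ℤ × ℤ),
        ℙ (B ∩ {ω | W (k + 1) ω - W k ω ∈ s}) = ℙ B * nuStep s)
    (Z : ℕ → Ω → ℤ)
    (hZ0 : ∀ ω, Z 0 ω = 0)
    (hZrec : ∀ (k : ℕ) (ω : Ω),
      (0 ≤ Z k ω → Z (k + 1) ω = Z k ω + ((W (k + 1) ω).2 - (W k ω).2)) ∧
      (Z k ω < 0 → Z k ω - ((W (k + 1) ω).1 - (W k ω).1) < 0 →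
        Z (k + 1) ω = Z k ω - ((W (k + 1) ω).1 - (W k ω).1)) ∧
      (Z k ω < 0 → 0 ≤ Z k ω - ((W (k + 1) ω).1 - (W k ω).1) →
        Z (k + 1) ω = (W (k + 1) ω).2 - (W k ω).2)) :
    ∀ (k : ℕ) (j : ℤ) (B : Set Ω),
      MeasurableSet[MeasurableSpace.comap (fun ω => fun i : Fin (k + 1) => W i ω)
        inferInstance] B →
      ℙ (B ∩ {ω | Z (k + 1) ω - Z k ω = j}) = stepProb j * ℙ B := by
  intro k j B hB
  have hZ (n : ℕ) (ω : Ω) :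
      Z (n + 1) ω - Z n ω = coalescentStep (Z n ω) (W (n + 1) ω - W n ω) :=
    sub_eq_coalescentStep (hZrec n ω)
  simp_rw [hZ]
  exact measure_inter_mem_of_indep
    (fun _ => nullMeasurableSet_of_measurableSet_comap_history hW0 hWstep k)
    (fun B hB s _ => hWstep k B hB s) (measurable_comap_history_of_sub_eq _ hZ0 hZ k)
    (fun _ => .of_discrete) (nuStep_coalescentStep · j) hB
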